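/- Let f ∈ ℂ[X] be a polynomial of degree n ≥ 1, and let D : ℂ[X] → ℂ[X] be the ℂ-linear map D(P) = P' + f'·P, where P' and f' denote derivatives. Then D is injective and the quotient ℂ[X]/range(D) is a ℂ-vector space of dimension n − 1. -/

import Mathlib

/-!
For `g ≠ 0` the derivative term of `D P = P' + g·P` has strictly smaller degree than `g·P`,
so `D` raises degrees by exactly `deg g` and multiplies leading coefficients by that of `g`.
Hence `D` is injective, and dividing by leading terms shows that every polynomial is
`D P` plus a remainder of degree `< deg g`, uniquely; the cokernel is therefore
`ℂ[X]_{< deg g}`, of dimension `deg g = deg f' = n - 1`.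
-/

open Polynomial Submodule

namespace Polynomial

variable {R : Type*} [CommRing R]

noncomputable def twistedDerivative (g : R[X]) : R[X] →ₗ[R] R[X] :=
  derivative + LinearMap.mulLeft R g

theorem twistedDerivative_apply (g P : R[X]) :
    twistedDerivative g P = derivative P + g * P := rfl

section Domain

variable [IsDomain R] {g : R[X]}

theorem degree_derivative_lt_degree_mul (hg : g ≠ 0) {P : R[X]} (hP : P ≠ 0) :
    (derivative P).degree < (g * P).degree :=
  (degree_derivative_lt hP).trans_le <| by
    rw [degree_mul]; exact le_add_of_nonneg_left (zero_le_degree_iff.2 hg)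

theorem degree_twistedDerivative (hg : g ≠ 0) (P : R[X]) :
    (twistedDerivative g P).degree = g.degree + P.degree := by
  rcases eq_or_ne P 0 with rfl | hP
  · simp
  rw [twistedDerivative_apply, degree_add_eq_right_of_degree_lt
    (degree_derivative_lt_degree_mul hg hP), degree_mul]

theorem leadingCoeff_twistedDerivative (hg : g ≠ 0) (P : R[X]) :
    (twistedDerivative g P).leadingCoeff = g.leadingCoeff * P.leadingCoeff := by
  rcases eq_or_ne P 0 with rfl | hP
  · simp
  rw [twistedDerivative_apply, leadingCoeff_add_of_degree_lt
    (degree_derivative_lt_degree_mul hg hP), leadingCoeff_mul]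

theorem twistedDerivative_injective (hg : g ≠ 0) : Function.Injective (twistedDerivative g) := by
  refine (injective_iff_map_eq_zero _).2 fun P hP => ?_
  have := degree_twistedDerivative hg P
  rw [hP, degree_zero, eq_comm, WithBot.add_eq_bot] at this
  exact degree_eq_bot.1 (this.resolve_left (mt degree_eq_bot.1 hg))

end Domain

section Field

variable {K : Type*} [Field K] {g : K[X]}

theorem disjoint_range_twistedDerivative_degreeLT (hg : g ≠ 0) :
    Disjoint (LinearMap.range (twistedDerivative g)) (degreeLT K g.natDegree) := by
  rw [disjoint_iff_inf_le]
  rintro _ ⟨⟨P, rfl⟩, hlt⟩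
  rw [SetLike.mem_coe, mem_degreeLT, degree_twistedDerivative hg,
    ← degree_eq_natDegree hg] at hlt
  rcases eq_or_ne P 0 with rfl | hP
  · simp
  · exact absurd hlt (not_lt.2 (le_add_of_nonneg_right (zero_le_degree_iff.2 hP)))

theorem mem_range_twistedDerivative_sup_degreeLT (hg : g ≠ 0) (h : K[X]) :
    h ∈ LinearMap.range (twistedDerivative g) ⊔ degreeLT K g.natDegree := by
  induction hd : h.degree using WellFoundedLT.induction generalizing h with
  | _ d ih =>
  by_cases hlt : h.degree < g.natDegree
  · exact mem_sup_right (mem_degreeLT.2 hlt)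
  have hh : h ≠ 0 := by rintro rfl; exact hlt (WithBot.bot_lt_coe _)
  have hgh : g.natDegree ≤ h.natDegree := by
    rw [degree_eq_natDegree hh, Nat.cast_lt, not_lt] at hlt; exact hlt
  set P := C (h.leadingCoeff / g.leadingCoeff) * X ^ (h.natDegree - g.natDegree)
  have hPdeg : (twistedDerivative g P).degree = h.degree := by
    rw [degree_twistedDerivative hg, degree_C_mul_X_pow _
      (div_ne_zero (leadingCoeff_ne_zero.2 hh) (leadingCoeff_ne_zero.2 hg)),
      degree_eq_natDegree hg, degree_eq_natDegree hh]
    exact_mod_cast Nat.add_sub_cancel' hgh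
  have hPlc : (twistedDerivative g P).leadingCoeff = h.leadingCoeff := by
    rw [leadingCoeff_twistedDerivative hg, leadingCoeff_C_mul_X_pow,
      mul_div_cancel₀ _ (leadingCoeff_ne_zero.2 hg)]
  have hrest := ih _ (hd ▸ degree_sub_lt_left hPdeg.symm hh hPlc.symm)
    (h - twistedDerivative g P) rfl
  simpa using add_mem hrest (mem_sup_left (LinearMap.mem_range_self _ P))

theorem isCompl_range_twistedDerivative_degreeLT (hg : g ≠ 0) :
    IsCompl (LinearMap.range (twistedDerivative g)) (degreeLT K g.natDegree) :=
  ⟨disjoint_range_twistedDerivative_degreeLT hg, codisjoint_iff_le_sup.2 fun h _ =>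
    mem_range_twistedDerivative_sup_degreeLT hg h⟩

theorem finrank_quotient_range_twistedDerivative (hg : g ≠ 0) :
    Module.finrank K (K[X] ⧸ LinearMap.range (twistedDerivative g)) = g.natDegree := by
  rw [((quotientEquivOfIsCompl _ _ (isCompl_range_twistedDerivative_degreeLT hg)).trans
    (degreeLTEquiv K g.natDegree)).finrank_eq, Module.finrank_fin_fun]

end Field

end Polynomial

/-- For any polynomial potential `f` of degree `n ≥ 1`, the twisted de Rham
differential `D(P) = P' + f'·P` on `ℂ[X]` is injective and its cokernel has
`ℂ`-dimension `n - 1` (the total Milnor number of `f`). -/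
theorem stmt_7 (f : ℂ[X]) (n : ℕ) (hn : 1 ≤ n) (hdeg : f.natDegree = n) :
    Function.Injective
        (Polynomial.derivative + LinearMap.mulLeft ℂ (Polynomial.derivative f) :
          ℂ[X] →ₗ[ℂ] ℂ[X]) ∧
      Module.finrank ℂ
          (ℂ[X] ⧸ LinearMap.range
            (Polynomial.derivative + LinearMap.mulLeft ℂ (Polynomial.derivative f) :
              ℂ[X] →ₗ[ℂ] ℂ[X])) = n - 1 := by
  have hf' : derivative f ≠ 0 := derivative_ne_zero.2 (by omega)
  refine ⟨twistedDerivative_injective hf', ?_⟩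
  rw [← twistedDerivative, finrank_quotient_range_twistedDerivative hf', natDegree_derivative,
    hdeg]
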